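/- Let ρ > 0, let k, A₀ : ℝ → ℝ be continuously differentiable with k > 0 and A₀ > 0, and let A, Q be continuously differentiable stationary (time-independent) solutions with A > 0 of the inviscid (C_f = 0) variable-stiffness blood flow system. Then Q is constant and the quantity (Q/A)²/2 + (1/(√π ρ))k(x)√A(x) − (1/(√π ρ))k(x)√A₀(x) is constant in x. -/

import Mathlib

/-!
With `Q` constant, `(Q²/A)' = A · ((Q/A)²/2)'` and `(k A^{3/2}/3)' = A · (k √A)' - (2/3) A √A k'`.
So the momentum equation, divided by `A > 0`, says that the Bernoulli head
`(Q/A)²/2 + k √A/(√π ρ)` has the same derivative as `k √A₀/(√π ρ)`: their difference is constant.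
-/

open Real

namespace BloodFlow

/-- `s` stands for `√π ρ`. -/
noncomputable def momentumFlux (s : ℝ) (Q A k : ℝ → ℝ) (x : ℝ) : ℝ :=
  Q x ^ 2 / A x + k x / (3 * s) * A x ^ (3 / 2 : ℝ)

noncomputable def bernoulliHead (s : ℝ) (Q A k : ℝ → ℝ) (x : ℝ) : ℝ :=
  (Q x / A x) ^ 2 / 2 + 1 / s * (k x * √(A x))

variable {s x A' k' : ℝ} {Q A k : ℝ → ℝ}

theorem rpow_three_halves {a : ℝ} (ha : 0 ≤ a) : a ^ (3 / 2 : ℝ) = a * √a := by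
  rw [show (3 / 2 : ℝ) = 1 + 1 / 2 by norm_num, rpow_add' ha (by norm_num), rpow_one,
    ← sqrt_eq_rpow]

theorem hasDerivAt_bernoulliHead (hQ : HasDerivAt Q 0 x) (hA : HasDerivAt A A' x)
    (hk : HasDerivAt k k' x) (hApos : 0 < A x) :
    HasDerivAt (bernoulliHead s Q A k)
      (-(Q x ^ 2 * A' / A x ^ 3) + 1 / s * (k' * √(A x) + k x * (A' / (2 * √(A x))))) x := by
  have hA0 : A x ≠ 0 := hApos.ne'
  have h : HasDerivAt (bernoulliHead s Q A k) _ x :=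
    (((hQ.div hA hA0).pow 2).div_const 2).add ((hk.mul (hA.sqrt hA0)).const_mul (1 / s))
  refine h.congr_deriv ?_
  simp only [Pi.div_apply]
  norm_num
  field_simp

theorem hasDerivAt_momentumFlux (hQ : HasDerivAt Q 0 x) (hA : HasDerivAt A A' x)
    (hk : HasDerivAt k k' x) (hApos : 0 < A x) :
    HasDerivAt (momentumFlux s Q A k)
      (-(Q x ^ 2 * A' / A x ^ 2) + (k' * (A x * √(A x)) + 3 / 2 * k x * A' * √(A x)) / (3 * s))
      x := by
  have hA0 : A x ≠ 0 := hApos.ne'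
  have h : HasDerivAt (momentumFlux s Q A k) _ x :=
    ((hQ.pow 2).div hA hA0).add
      ((hk.div_const (3 * s)).mul (hA.rpow_const (p := 3 / 2) (Or.inl hA0)))
  refine h.congr_deriv ?_
  simp only [Pi.pow_apply]
  rw [rpow_three_halves hApos.le, show (3 / 2 : ℝ) - 1 = 1 / 2 by norm_num, ← sqrt_eq_rpow]
  field_simp
  ring

theorem deriv_momentumFlux (hQ : HasDerivAt Q 0 x) (hA : DifferentiableAt ℝ A x)
    (hk : DifferentiableAt ℝ k x) (hApos : 0 < A x) :
    deriv (momentumFlux s Q A k) x =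
      A x * (deriv (bernoulliHead s Q A k) x - 2 / 3 * √(A x) * deriv k x / s) := by
  rw [(hasDerivAt_momentumFlux hQ hA.hasDerivAt hk.hasDerivAt hApos).deriv,
    (hasDerivAt_bernoulliHead hQ hA.hasDerivAt hk.hasDerivAt hApos).deriv]
  have hsqrt : √(A x) ^ 2 = A x := sq_sqrt hApos.le
  have hsqrt0 : √(A x) ≠ 0 := (sqrt_pos.2 hApos).ne'
  field_simp
  linear_combination (3 * A x ^ 2 * deriv A x * k x / s) * hsqrt

/-- `G` plays the role of `𝐀₀ = k √A₀`. -/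
theorem exists_bernoulliHead_sub_eq_const {G : ℝ → ℝ} (hQ : ∀ x, HasDerivAt Q 0 x)
    (hA : Differentiable ℝ A) (hk : Differentiable ℝ k) (hG : Differentiable ℝ G)
    (hApos : ∀ x, 0 < A x)
    (hmom : ∀ x, deriv (momentumFlux s Q A k) x =
      A x / s * (deriv G x - 2 / 3 * √(A x) * deriv k x)) :
    ∃ C, ∀ x, bernoulliHead s Q A k x - 1 / s * G x = C := by
  have hhead : ∀ x, deriv (bernoulliHead s Q A k) x = 1 / s * deriv G x := fun x => by
    have h := (deriv_momentumFlux (hQ x) (hA x) (hk x) (hApos x)).symm.trans (hmom x)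
    have h' := mul_left_cancel₀ (hApos x).ne' <| h.trans <|
      show A x / s * (deriv G x - 2 / 3 * √(A x) * deriv k x) =
        A x * (1 / s * (deriv G x - 2 / 3 * √(A x) * deriv k x)) by ring
    linear_combination h'
  have hE : ∀ x, HasDerivAt (fun y => bernoulliHead s Q A k y - 1 / s * G y) 0 x := fun x => by
    have hB := (hasDerivAt_bernoulliHead (s := s) (hQ x) (hA x).hasDerivAt (hk x).hasDerivAt
      (hApos x)).differentiableAt.hasDerivAt
    exact (hB.sub ((hG x).hasDerivAt.const_mul (1 / s))).congr_deriv (by rw [hhead x, sub_self])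
  exact ⟨_, fun x => is_const_of_deriv_eq_zero (fun x => (hE x).differentiableAt)
    (fun x => (hE x).deriv) x 0⟩

end BloodFlow

open BloodFlow in
theorem blood_flow_variable_stiffness_bernoulli_general
    (ρ : ℝ)
    (k A₀ : ℝ → ℝ) (hk : ContDiff ℝ 1 k) (hA₀ : ContDiff ℝ 1 A₀)
    (hA₀pos : ∀ x, 0 < A₀ x)
    (A Q : ℝ → ℝ) (hA : ContDiff ℝ 1 A) (hQ : ContDiff ℝ 1 Q)
    (hApos : ∀ x, 0 < A x)
    (hQconst : ∀ x, deriv Q x = 0)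
    (hmom : ∀ x,
      deriv (fun y => Q y ^ 2 / A y +
          k y / (3 * Real.sqrt π * ρ) * A y ^ (3 / 2 : ℝ)) x =
      A x / (Real.sqrt π * ρ) *
          (deriv (fun y => k y * Real.sqrt (A₀ y)) x
            - 2 / 3 * Real.sqrt (A x) * deriv k x)) :
    (∃ Q₀ : ℝ, ∀ x, Q x = Q₀) ∧
      ∃ C : ℝ, ∀ x, (Q x / A x) ^ 2 / 2 +
        1 / (Real.sqrt π * ρ) * (k x * Real.sqrt (A x)) -
        1 / (Real.sqrt π * ρ) * (k x * Real.sqrt (A₀ x)) = C := by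
  have hQd := hQ.differentiable one_ne_zero
  have hkd := hk.differentiable one_ne_zero
  have hflux : momentumFlux (√π * ρ) Q A k = fun y => Q y ^ 2 / A y +
      k y / (3 * √π * ρ) * A y ^ (3 / 2 : ℝ) := by
    funext y
    simp only [momentumFlux, mul_assoc]
  refine ⟨⟨Q 0, fun x => is_const_of_deriv_eq_zero hQd hQconst x 0⟩, ?_⟩
  exact exists_bernoulliHead_sub_eq_const (fun x => hQconst x ▸ (hQd x).hasDerivAt)
    (hA.differentiable one_ne_zero) hkd
    (fun x => (hkd x).mul (((hA₀.differentiable one_ne_zero) x).sqrt (hA₀pos x).ne'))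
    hApos (hflux ▸ hmom)

/-- For stationary inviscid solutions of the variable-stiffness blood flow system,
the discharge is constant and the generalized Bernoulli quantity
`(Q/A)²/2 + k√A/(√π ρ) − k√A₀/(√π ρ)` is constant. -/
theorem blood_flow_variable_stiffness_bernoulli
    (ρ : ℝ) (hρ : 0 < ρ)
    (k A₀ : ℝ → ℝ) (hk : ContDiff ℝ 1 k) (hA₀ : ContDiff ℝ 1 A₀)
    (hkpos : ∀ x, 0 < k x) (hA₀pos : ∀ x, 0 < A₀ x)
    (A Q : ℝ → ℝ) (hA : ContDiff ℝ 1 A) (hQ : ContDiff ℝ 1 Q)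
    (hApos : ∀ x, 0 < A x)
    (hQconst : ∀ x, deriv Q x = 0)
    (hmom : ∀ x,
      deriv (fun y => Q y ^ 2 / A y +
          k y / (3 * Real.sqrt π * ρ) * A y ^ (3 / 2 : ℝ)) x =
      A x / (Real.sqrt π * ρ) *
          (deriv (fun y => k y * Real.sqrt (A₀ y)) x
            - 2 / 3 * Real.sqrt (A x) * deriv k x)) :
    (∃ Q₀ : ℝ, ∀ x, Q x = Q₀) ∧
      ∃ C : ℝ, ∀ x, (Q x / A x) ^ 2 / 2 +
        1 / (Real.sqrt π * ρ) * (k x * Real.sqrt (A x)) -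
        1 / (Real.sqrt π * ρ) * (k x * Real.sqrt (A₀ x)) = C :=
  blood_flow_variable_stiffness_bernoulli_general ρ k A₀ hk hA₀ hA₀pos A Q hA hQ hApos hQconst hmom
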